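/- Let (Ω,≤) be a totally ordered set such that G := Aut(Ω,≤) acts transitively on Ω, and suppose (G,Ω) is controlled. Then every non-minimal element of the spine 𝔎 has a predecessor in 𝔎: for every K ∈ 𝔎 that is not minimal in 𝔎 there is K' ∈ 𝔎 with K' ⊊ K such that no element of 𝔎 lies strictly between K' and K. -/

import Mathlib

/-!  Common framework for ℓ-permutation groups on a totally ordered set. -/

namespace LPerm

variable {Ω : Type*} [LinearOrder Ω]

/-- Pointwise join of two order automorphisms of a totally ordered set. -/
def autSup (f g : Ω ≃o Ω) : Ω ≃o Ω :=
  Equiv.toOrderIso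
    { toFun := fun α => max (f α) (g α)
      invFun := fun α => min (f.symm α) (g.symm α)
      left_inv := by
        intro α
        dsimp only
        rcases le_total (f α) (g α) with h | h
        · rw [max_eq_right h]
          have h1 : α ≤ f.symm (g α) := by
            have := f.symm.monotone h
            simpa using this
          rw [g.symm_apply_apply, min_eq_right h1]
        · rw [max_eq_left h]
          have h1 : α ≤ g.symm (f α) := by
            have := g.symm.monotone h
            simpa using this
          rw [f.symm_apply_apply, min_eq_left h1]
      right_inv := by
        intro α
        dsimp only
        rcases le_total (f.symm α) (g.symm α) with h | h
        · rw [min_eq_left h]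
          have h1 : g (f.symm α) ≤ α := by
            have := g.monotone h
            simpa using this
          rw [f.apply_symm_apply, max_eq_left h1]
        · rw [min_eq_right h]
          have h1 : f (g.symm α) ≤ α := by
            have := f.monotone h
            simpa using this
          rw [g.apply_symm_apply, max_eq_right h1] }
    (f.monotone.max g.monotone)
    (f.symm.monotone.min g.symm.monotone)

/-- Pointwise meet of two order automorphisms of a totally ordered set. -/
def autInf (f g : Ω ≃o Ω) : Ω ≃o Ω :=
  Equiv.toOrderIso
    { toFun := fun α => min (f α) (g α)
      invFun := fun α => max (f.symm α) (g.symm α)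
      left_inv := by
        intro α
        dsimp only
        rcases le_total (f α) (g α) with h | h
        · rw [min_eq_left h]
          have h1 : g.symm (f α) ≤ α := by
            have := g.symm.monotone h
            simpa using this
          rw [f.symm_apply_apply, max_eq_left h1]
        · rw [min_eq_right h]
          have h1 : f.symm (g α) ≤ α := by
            have := f.symm.monotone h
            simpa using this
          rw [g.symm_apply_apply, max_eq_right h1]
      right_inv := by
        intro α
        dsimp only
        rcases le_total (f.symm α) (g.symm α) with h | h
        · rw [max_eq_right h]
          have h1 : α ≤ f (g.symm α) := by
            have := f.monotone h
            simpa using this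
          rw [g.apply_symm_apply, min_eq_right h1]
        · rw [max_eq_left h]
          have h1 : α ≤ g (f.symm α) := by
            have := g.monotone h
            simpa using this
          rw [f.apply_symm_apply, min_eq_left h1] }
    (f.monotone.min g.monotone)
    (f.symm.monotone.max g.symm.monotone)


/-- The pointwise order on order automorphisms: `f ≤ g` iff `f α ≤ g α` for all `α`. -/
def autLe (f g : Ω ≃o Ω) : Prop := ∀ α : Ω, f α ≤ g α

/-- `|g| = g ∨ g⁻¹`. -/
def autAbs (g : Ω ≃o Ω) : Ω ≃o Ω := autSup g g⁻¹

/-- The support of an automorphism. -/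
def supp (g : Ω ≃o Ω) : Set Ω := {α | g α ≠ α}

/-- Conjugation, written `h^g = g⁻¹ h g` in the paper. -/
def aconj (h g : Ω ≃o Ω) : Ω ≃o Ω := g⁻¹ * h * g

/-- The commutator `[a,b] = a⁻¹ b⁻¹ a b`. -/
def pcomm (a b : Ω ≃o Ω) : Ω ≃o Ω := a⁻¹ * b⁻¹ * a * b

/-- `G` is closed under the pointwise lattice operations, i.e. `(G,Ω)` is an
ℓ-permutation group. -/
def SublatticeClosed (G : Subgroup (Ω ≃o Ω)) : Prop :=
  ∀ f g : Ω ≃o Ω, f ∈ G → g ∈ G → autSup f g ∈ G ∧ autInf f g ∈ G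

/-- `(G,Ω)` is transitive. -/
def IsTransitive (G : Subgroup (Ω ≃o Ω)) : Prop :=
  ∀ α β : Ω, ∃ g ∈ G, g α = β

/-- `(G,Ω)` is o-2 transitive. -/
def IsO2Transitive (G : Subgroup (Ω ≃o Ω)) : Prop :=
  ∀ α₁ α₂ β₁ β₂ : Ω, α₁ < α₂ → β₁ < β₂ → ∃ g ∈ G, g α₁ = β₁ ∧ g α₂ = β₂

/-- A convex `G`-congruence: an equivalence relation with convex classes which is
preserved by the action of `G`. -/
def IsConvexCongruence (G : Subgroup (Ω ≃o Ω)) (r : Ω → Ω → Prop) : Prop :=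
  Equivalence r ∧ (∀ α β γ : Ω, r α γ → α ≤ β → β ≤ γ → r α β) ∧
    ∀ g ∈ G, ∀ α β : Ω, r α β → r (g α) (g β)

/-- `V(α,β)`: the intersection of all convex `G`-congruences under which `α` and `β`
are equivalent. -/
def Vcong (G : Subgroup (Ω ≃o Ω)) (α β : Ω) : Ω → Ω → Prop :=
  fun γ δ => ∀ r : Ω → Ω → Prop, IsConvexCongruence G r → r α β → r γ δ

/-- Membership in the spine `𝔎` of `(G,Ω)`. -/
def SpineMem (G : Subgroup (Ω ≃o Ω)) (r : Ω → Ω → Prop) : Prop :=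
  ∃ α β : Ω, α ≠ β ∧ r = Vcong G α β

/-- Inclusion of relations. -/
def relLe (r s : Ω → Ω → Prop) : Prop := ∀ x y : Ω, r x y → s x y

/-- `Δ ∈ T`: `Δ` is an o-block (class) of a member of the spine `𝔎`. -/
def InT (G : Subgroup (Ω ≃o Ω)) (Δ : Set Ω) : Prop :=
  ∃ r : Ω → Ω → Prop, SpineMem G r ∧ ∃ δ : Ω, Δ = {γ | r δ γ}

/-- `Δ` is a class (o-block) of the relation `r`. -/
def IsBlockOf (r : Ω → Ω → Prop) (Δ : Set Ω) : Prop :=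
  ∃ δ : Ω, Δ = {γ | r δ γ}

/-- The restricted stabiliser `rst(S) = {g ∈ G ∣ supp g ⊆ S}`. -/
def rst (G : Subgroup (Ω ≃o Ω)) (S : Set Ω) : Set (Ω ≃o Ω) :=
  {g | g ∈ G ∧ supp g ⊆ S}

/-- The (setwise) stabiliser `st(Δ) = {g ∈ G ∣ Δg = Δ}`. -/
def stab (G : Subgroup (Ω ≃o Ω)) (Δ : Set Ω) : Set (Ω ≃o Ω) :=
  {g | g ∈ G ∧ g '' Δ = Δ}

/-- `Q_Δ = {h ∈ rst(Δ) ∣ ∃ α ∈ Δ, V(α, αh) = κ(Δ)}`; since `κ(Δ)` is the unique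
convex congruence having `Δ` as a class, the condition `V(α,αh) = κ(Δ)` says exactly
that `Δ` is the class of `V(α, αh)` containing `α`. -/
def Qset (G : Subgroup (Ω ≃o Ω)) (Δ : Set Ω) : Set (Ω ≃o Ω) :=
  {h | h ∈ rst G Δ ∧ ∃ α ∈ Δ, Δ = {γ | Vcong G α (h α) α γ}}

/-- `(G,Ω)` is ample: `Q_Δ ≠ ∅` for every `Δ ∈ T`. -/
def Ample (G : Subgroup (Ω ≃o Ω)) : Prop :=
  ∀ Δ : Set Ω, InT G Δ → (Qset G Δ).Nonempty

/-- `(G,Ω)` is abundant: for every `Δ ∈ T` and `g ∈ st(Δ)`, the automorphism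
`dep(g,Δ)` agreeing with `g` on `Δ` and with the identity elsewhere lies in `G`. -/
def Abundant (G : Subgroup (Ω ≃o Ω)) : Prop :=
  ∀ Δ : Set Ω, InT G Δ → ∀ g ∈ stab G Δ,
    ∃ g₀ ∈ G, (∀ α ∈ Δ, g₀ α = g α) ∧ ∀ α ∉ Δ, g₀ α = α

/-- The spine `𝔎` has no minimal element. -/
def SpineNoMin (G : Subgroup (Ω ≃o Ω)) : Prop :=
  ∀ r : Ω → Ω → Prop, SpineMem G r →
    ∃ r' : Ω → Ω → Prop, SpineMem G r' ∧ relLe r' r ∧ r' ≠ r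

/-- `Δ` is a minimal element of `T`. -/
def MinimalInT (G : Subgroup (Ω ≃o Ω)) (Δ : Set Ω) : Prop :=
  InT G Δ ∧ ∀ Δ' : Set Ω, InT G Δ' → Δ' ⊆ Δ → Δ' = Δ

/-- Hypothesis (†): if `T` has a minimal element `Δ₀`, then every (nondegenerate
bounded) interval of `Δ₀` supports a non-trivial element of `G`. -/
def Dagger (G : Subgroup (Ω ≃o Ω)) : Prop :=
  ∀ Δ₀ : Set Ω, MinimalInT G Δ₀ → ∀ α β : Ω, α ∈ Δ₀ → β ∈ Δ₀ → α < β →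
    ∃ g : Ω ≃o Ω, g ∈ G ∧ g ≠ 1 ∧ supp g ⊆ Set.Ioo α β

/-- `X_h = {[h⁻¹, h^g] ∣ g ∈ G}`. -/
def Xset (G : Subgroup (Ω ≃o Ω)) (h : Ω ≃o Ω) : Set (Ω ≃o Ω) :=
  {x | ∃ g ∈ G, x = pcomm h⁻¹ (aconj h g)}

/-- `W_h = ⋃ {X_{h^g} ∣ g ∈ G, [X_h, X_{h^g}] ≠ 1}`. -/
def Wset (G : Subgroup (Ω ≃o Ω)) (h : Ω ≃o Ω) : Set (Ω ≃o Ω) :=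
  {x | ∃ g ∈ G, (∃ a ∈ Xset G h, ∃ b ∈ Xset G (aconj h g), pcomm a b ≠ 1) ∧
    x ∈ Xset G (aconj h g)}

/-- The centraliser of a subset `S` in `G`. -/
def cent (G : Subgroup (Ω ≃o Ω)) (S : Set (Ω ≃o Ω)) : Set (Ω ≃o Ω) :=
  {f | f ∈ G ∧ ∀ s ∈ S, s * f = f * s}

/-- The double centraliser of a subset `S` in `G`. -/
def cent2 (G : Subgroup (Ω ≃o Ω)) (S : Set (Ω ≃o Ω)) : Set (Ω ≃o Ω) :=
  cent G (cent G S)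

/-- The pointwise stabiliser in `G` of a subset `S ⊆ Ω`. -/
def ptStab (G : Subgroup (Ω ≃o Ω)) (S : Set Ω) : Set (Ω ≃o Ω) :=
  {f | f ∈ G ∧ ∀ α ∈ S, f α = α}

/-- The congruence covered by `K`: the union of all convex `G`-congruences properly
contained in `K`. -/
def coveredRel (G : Subgroup (Ω ≃o Ω)) (K : Ω → Ω → Prop) : Ω → Ω → Prop :=
  fun γ δ => ∃ r : Ω → Ω → Prop, IsConvexCongruence G r ∧ relLe r K ∧ r ≠ K ∧ r γ δ

/-- `Γ ∈ π(Δ)`, where `K = κ(Δ)`: `Γ` is a class of the congruence covered by `K`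
contained in `Δ`. -/
def InPi (G : Subgroup (Ω ≃o Ω)) (K : Ω → Ω → Prop) (Δ Γ : Set Ω) : Prop :=
  ∃ δ ∈ Δ, Γ = {γ | coveredRel G K δ γ}

/-- An irreducible element of `G`. -/
def IsIrreducibleElt (G : Subgroup (Ω ≃o Ω)) (g : Ω ≃o Ω) : Prop :=
  autLe 1 g ∧ g ≠ 1 ∧
    ∀ g₁ g₂ : Ω ≃o Ω, g₁ ∈ G → g₂ ∈ G → autSup g₁ g₂ = g → autInf g₁ g₂ = 1 →
      g₁ = 1 ∨ g₂ = 1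

/-- `(G,Ω)` is controlled. -/
def Controlled (G : Subgroup (Ω ≃o Ω)) : Prop :=
  ∀ Δ : Set Ω, InT G Δ → ¬ MinimalInT G Δ → ∀ g ∈ rst G Δ,
    (∃ δ ∈ Δ ∩ supp g, Δ = {γ | Vcong G δ (g δ) δ γ}) ∨
      ∃ Δ' : Set Ω, InT G Δ' ∧ supp g ⊆ Δ' ∧ Δ' ⊂ Δ



section AuxLemmas

lemma cong_inv {r : Ω → Ω → Prop} (hr : IsConvexCongruence (⊤ : Subgroup (Ω ≃o Ω)) r) (g : Ω ≃o Ω) {a b : Ω}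
    (h : r (g a) (g b)) : r a b := by
  have := hr.2.2 g⁻¹ (Subgroup.mem_top _) _ _ h
  simpa using this

lemma cong_cls {r : Ω → Ω → Prop} (hr : IsConvexCongruence (⊤ : Subgroup (Ω ≃o Ω)) r) {p a b c : Ω}
    (h1 : r p a) (h2 : r p b) (hac : a ≤ c) (hcb : c ≤ b) : r p c := by
  have hab : r a b := hr.1.trans (hr.1.symm h1) h2
  exact hr.1.trans h1 (hr.2.1 a c b hab hac hcb)

lemma isCC_Vcong (α β : Ω) : IsConvexCongruence (⊤ : Subgroup (Ω ≃o Ω)) (Vcong ⊤ α β) := by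
  refine ⟨⟨fun x r hr _ => hr.1.refl x,
           fun h r hr hab => hr.1.symm (h r hr hab),
           fun h1 h2 r hr hab => hr.1.trans (h1 r hr hab) (h2 r hr hab)⟩,
         fun a b c h hab hbc r hr hrab => hr.2.1 a b c (h r hr hrab) hab hbc,
         fun g _ a b h r hr hrab => hr.2.2 g (Subgroup.mem_top _) a b (h r hr hrab)⟩

lemma vcong_self (α β : Ω) : Vcong (⊤ : Subgroup (Ω ≃o Ω)) α β α β :=
  fun _ _ h => h

lemma vcong_min {α β : Ω} {r : Ω → Ω → Prop} (hr : IsConvexCongruence (⊤ : Subgroup (Ω ≃o Ω)) r) (h : r α β) :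
    relLe (Vcong ⊤ α β) r := fun _ _ hv => hv r hr h

lemma vcong_move (α β : Ω) (g : Ω ≃o Ω) :
    Vcong (⊤ : Subgroup (Ω ≃o Ω)) α β = Vcong ⊤ (g α) (g β) := by
  funext x y
  apply propext
  constructor
  · intro h r hr hab
    exact h r hr (by have := hr.2.2 g⁻¹ (Subgroup.mem_top _) _ _ hab; simpa using this)
  · intro h r hr hab
    exact h r hr (hr.2.2 g (Subgroup.mem_top _) _ _ hab)

variable (hT : ∀ α β : Ω, ∃ g : Ω ≃o Ω, g α = β)

include hT

/-- transport: inclusion of classes at one point gives inclusion of relations -/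
lemma cls_le {r s : Ω → Ω → Prop} (hr : IsConvexCongruence (⊤ : Subgroup (Ω ≃o Ω)) r) (hs : IsConvexCongruence (⊤ : Subgroup (Ω ≃o Ω)) s) (p : Ω)
    (h : ∀ γ, r p γ → s p γ) : relLe r s := by
  intro x y hxy
  obtain ⟨g, hg⟩ := hT x p
  have h1 : r p (g y) := by
    have := hr.2.2 g (Subgroup.mem_top _) _ _ hxy
    rwa [hg] at this
  have h2 : s p (g y) := h _ h1
  have := hs.2.2 g⁻¹ (Subgroup.mem_top _) _ _ h2
  rw [← hg] at this
  simpa using this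

lemma cong_comparable {r s : Ω → Ω → Prop} (hr : IsConvexCongruence (⊤ : Subgroup (Ω ≃o Ω)) r) (hs : IsConvexCongruence (⊤ : Subgroup (Ω ≃o Ω)) s) :
    relLe r s ∨ relLe s r := by
  by_contra hc
  push_neg at hc
  obtain ⟨h1, h2⟩ := hc
  simp only [relLe, not_forall] at h1 h2
  obtain ⟨p, b, hrpb, hnspb⟩ := h1
  obtain ⟨u, v, hsuv, hnruv⟩ := h2
  obtain ⟨g, hg⟩ := hT u p
  have hspc : s p (g v) := by
    have := hs.2.2 g (Subgroup.mem_top _) _ _ hsuv; rwa [hg] at this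
  have hnrpc : ¬ r p (g v) := by
    intro h'
    apply hnruv
    have := hr.2.2 g⁻¹ (Subgroup.mem_top _) _ _ h'
    rw [← hg] at this
    simpa using this
  set c := g v with hc
  have hbp : b ≠ p := fun h => hnspb (h ▸ hs.1.refl p)
  have hcp : c ≠ p := fun h => hnrpc (h ▸ hr.1.refl p)
  have hrpp : r p p := hr.1.refl p
  have hspp : s p p := hs.1.refl p
  rcases hbp.lt_or_gt with hb | hb <;> rcases hcp.lt_or_gt with hcl | hcl
  · -- b < p, c < p
    rcases le_total b c with h' | h'
    · exact hnrpc (cong_cls hr hrpb hrpp h' hcl.le)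
    · exact hnspb (cong_cls hs hspc hspp h' hb.le)
  · -- b < p, p < c
    obtain ⟨g2, hg2⟩ := hT b p
    have hrppg : r p (g2 p) := by
      have := hr.2.2 g2 (Subgroup.mem_top _) _ _ (hr.1.symm hrpb)
      rwa [hg2] at this
    have hlt : p < g2 p := by
      have := g2.strictMono hb
      rwa [hg2] at this
    rcases le_total c (g2 p) with h' | h'
    · exact hnrpc (cong_cls hr hrpp hrppg hcl.le h')
    · have hspg : s p (g2 p) := cong_cls hs hspp hspc hlt.le h'
      exact hnspb (hs.1.symm (cong_inv hs g2 (by rw [hg2]; exact hspg)))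
  · -- p < b, c < p
    obtain ⟨g2, hg2⟩ := hT c p
    have hsppg : s p (g2 p) := by
      have := hs.2.2 g2 (Subgroup.mem_top _) _ _ (hs.1.symm hspc)
      rwa [hg2] at this
    have hlt : p < g2 p := by
      have := g2.strictMono hcl
      rwa [hg2] at this
    rcases le_total b (g2 p) with h' | h'
    · exact hnspb (cong_cls hs hspp hsppg hb.le h')
    · have hrpg : r p (g2 p) := cong_cls hr hrpp hrpb hlt.le h'
      exact hnrpc (hr.1.symm (cong_inv hr g2 (by rw [hg2]; exact hrpg)))
  · -- p < b, p < c
    rcases le_total c b with h' | h'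
    · exact hnrpc (cong_cls hr hrpp hrpb hcl.le h')
    · exact hnspb (cong_cls hs hspp hspc hb.le h')

lemma cls_eq_rel_eq {r s : Ω → Ω → Prop} (hr : IsConvexCongruence (⊤ : Subgroup (Ω ≃o Ω)) r) (hs : IsConvexCongruence (⊤ : Subgroup (Ω ≃o Ω)) s) (p : Ω)
    (h : ∀ γ, r p γ ↔ s p γ) : r = s := by
  have h1 := cls_le hT hr hs p (fun γ => (h γ).1)
  have h2 := cls_le hT hs hr p (fun γ => (h γ).2)
  funext x y
  exact propext ⟨fun hh => h1 x y hh, fun hh => h2 x y hh⟩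


end AuxLemmas

lemma patch_iso {ι : Type*} (C : ι → Set Ω) (q : ι → (Ω ≃o Ω))
    (hdisj : ∀ {i j : ι} {x : Ω}, x ∈ C i → x ∈ C j → i = j)
    (hconv : ∀ i, ∀ a ∈ C i, ∀ b ∈ C i, ∀ c, a ≤ c → c ≤ b → c ∈ C i)
    (hmap : ∀ i, ∀ x ∈ C i, q i x ∈ C i)
    (hsur : ∀ i, ∀ y ∈ C i, ∃ x ∈ C i, q i x = y) :
    ∃ h : Ω ≃o Ω, (∀ i, ∀ x ∈ C i, h x = q i x) ∧ ∀ x, (∀ i, x ∉ C i) → h x = x := by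
  classical
  set f : Ω → Ω := fun x => if hx : ∃ i, x ∈ C i then q hx.choose x else x with hf
  have hf1 : ∀ i, ∀ x ∈ C i, f x = q i x := by
    intro i x hx
    have hex : ∃ i, x ∈ C i := ⟨i, hx⟩
    simp only [hf, dif_pos hex]
    rw [hdisj hex.choose_spec hx]
  have hf0 : ∀ x, (∀ i, x ∉ C i) → f x = x := by
    intro x h
    simp only [hf]
    exact dif_neg (by rintro ⟨i, hi⟩; exact h i hi)
  have hmem : ∀ i, ∀ x ∈ C i, f x ∈ C i := by
    intro i x hx; rw [hf1 i x hx]; exact hmap i x hx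
  have hmono : StrictMono f := by
    intro a b hab
    by_cases ha : ∃ i, a ∈ C i
    · obtain ⟨i, hai⟩ := ha
      by_cases hb : ∃ j, b ∈ C j
      · obtain ⟨j, hbj⟩ := hb
        by_cases hij : i = j
        · subst hij
          rw [hf1 i a hai, hf1 i b hbj]
          exact (q i).strictMono hab
        · have key : ∀ u ∈ C i, ∀ v ∈ C j, u < v := by
            intro u hu v hv
            by_contra h'
            push_neg at h'
            rcases le_total a v with h1 | h1
            · exact hij (hdisj (hconv i a hai u hu v h1 h') hv)
            · exact hij (hdisj hai (hconv j v hv b hbj a h1 hab.le))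
          rw [hf1 i a hai, hf1 j b hbj]
          exact key _ (hmap i a hai) _ (hmap j b hbj)
      · rw [hf1 i a hai, hf0 b (fun j hj => hb ⟨j, hj⟩)]
        by_contra h'
        push_neg at h'
        exact hb ⟨i, hconv i a hai _ (hmap i a hai) b hab.le h'⟩
    · rw [hf0 a (fun i hi => ha ⟨i, hi⟩)]
      by_cases hb : ∃ j, b ∈ C j
      · obtain ⟨j, hbj⟩ := hb
        rw [hf1 j b hbj]
        by_contra h'
        push_neg at h'
        exact ha ⟨j, hconv j _ (hmap j b hbj) b hbj a h' hab.le⟩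
      · rw [hf0 b (fun j hj => hb ⟨j, hj⟩)]
        exact hab
  have hsurj : Function.Surjective f := by
    intro y
    by_cases hy : ∃ j, y ∈ C j
    · obtain ⟨j, hyj⟩ := hy
      obtain ⟨x, hxj, hqx⟩ := hsur j y hyj
      exact ⟨x, by rw [hf1 j x hxj, hqx]⟩
    · exact ⟨y, hf0 y (fun i hi => hy ⟨i, hi⟩)⟩
  refine ⟨StrictMono.orderIsoOfSurjective f hmono hsurj, ?_, ?_⟩
  · intro i x hx
    rw [congrFun (StrictMono.coe_orderIsoOfSurjective f hmono hsurj) x]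
    exact hf1 i x hx
  · intro x hx
    rw [congrFun (StrictMono.coe_orderIsoOfSurjective f hmono hsurj) x]
    exact hf0 x hx

/-- If the full automorphism group of `Ω` is transitive and
controlled, then every non-minimal element of the spine has a predecessor. -/
theorem controlled_spine_predecessor {Ω : Type*} [LinearOrder Ω]
    (htrans : ∀ α β : Ω, ∃ g : Ω ≃o Ω, g α = β)
    (hctrl : Controlled (⊤ : Subgroup (Ω ≃o Ω))) :
    ∀ K : Ω → Ω → Prop, SpineMem (⊤ : Subgroup (Ω ≃o Ω)) K →
      (∃ K₀ : Ω → Ω → Prop, SpineMem (⊤ : Subgroup (Ω ≃o Ω)) K₀ ∧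
        relLe K₀ K ∧ K₀ ≠ K) →
      ∃ K' : Ω → Ω → Prop, SpineMem (⊤ : Subgroup (Ω ≃o Ω)) K' ∧
        relLe K' K ∧ K' ≠ K ∧
        ∀ K'' : Ω → Ω → Prop, SpineMem (⊤ : Subgroup (Ω ≃o Ω)) K'' →
          ¬(relLe K' K'' ∧ K' ≠ K'' ∧ relLe K'' K ∧ K'' ≠ K) := by
  classical
  rintro K ⟨α, β, hαβ, rfl⟩ hnonmin
  have hKcong : IsConvexCongruence (⊤ : Subgroup (Ω ≃o Ω)) (Vcong ⊤ α β) := isCC_Vcong α β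
  set P : Set (Ω → Ω → Prop) :=
    {J | (∃ x, x ≠ α ∧ J = Vcong ⊤ α x) ∧ relLe J (Vcong ⊤ α β) ∧ J ≠ Vcong ⊤ α β}
    with hPdef
  have hPcong : ∀ J ∈ P, IsConvexCongruence (⊤ : Subgroup (Ω ≃o Ω)) J := by
    rintro J ⟨⟨x, hx, rfl⟩, -⟩
    exact isCC_Vcong α x
  have hspineP : ∀ K'' : Ω → Ω → Prop, SpineMem (⊤ : Subgroup (Ω ≃o Ω)) K'' →
      relLe K'' (Vcong ⊤ α β) → K'' ≠ Vcong ⊤ α β → K'' ∈ P := by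
    rintro K'' ⟨a, b, hab, rfl⟩ hle hne
    obtain ⟨g, hg⟩ := htrans a α
    refine ⟨⟨g b, ?_, ?_⟩, hle, hne⟩
    · intro h
      exact hab (g.injective (hg.trans h.symm))
    · rw [vcong_move a b g, hg]
  obtain ⟨K₀, hK₀spine, hK₀le, hK₀ne⟩ := hnonmin
  have hK₀P : K₀ ∈ P := hspineP K₀ hK₀spine hK₀le hK₀ne
  -- the key claim: P has a maximum
  have hmaxP : ∃ J ∈ P, ∀ J' ∈ P, relLe J' J := by
    by_contra hmax
    push_neg at hmax
    simp only [relLe, not_forall] at hmax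
    -- hmax : ∀ J ∈ P, ∃ J' ∈ P, ∃ x y, J' x y ∧ ¬ J x y
    have hmax' : ∀ J ∈ P, ∃ J' ∈ P, ¬ relLe J' J := by
      intro J hJ
      obtain ⟨J', hJ'P, x, y, hxy, hnxy⟩ := hmax J hJ
      exact ⟨J', hJ'P, fun h => hnxy (h x y hxy)⟩
    -- the block Δ
    set Δ : Set Ω := {γ | Vcong ⊤ α β α γ} with hΔdef
    have hInT : InT (⊤ : Subgroup (Ω ≃o Ω)) Δ := ⟨Vcong ⊤ α β, ⟨α, β, hαβ, rfl⟩, α, rfl⟩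
    have hdiff : ∃ w, Vcong ⊤ α β α w ∧ ¬ K₀ α w := by
      by_contra h
      push_neg at h
      have h1 := cls_le htrans hKcong (hPcong K₀ hK₀P) α h
      exact hK₀ne (funext fun x => funext fun y =>
        propext ⟨fun hh => hK₀le x y hh, fun hh => h1 x y hh⟩)
    obtain ⟨w, hw1, hw2⟩ := hdiff
    have hnotmin : ¬ MinimalInT (⊤ : Subgroup (Ω ≃o Ω)) Δ := by
      rintro ⟨-, hmin⟩
      have h0 : InT (⊤ : Subgroup (Ω ≃o Ω)) {γ | K₀ α γ} := ⟨K₀, hK₀spine, α, rfl⟩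
      have hsub : {γ | K₀ α γ} ⊆ Δ := fun γ hγ => hK₀le _ _ hγ
      have heq := hmin _ h0 hsub
      apply hw2
      have : w ∈ {γ | K₀ α γ} := by rw [heq]; exact hw1
      exact this
    -- well-founded machinery
    have wf : WellFounded (WellOrderingRel (α := Ω → Ω → Prop)) := IsWellFounded.wf
    set S : Set (Ω → Ω → Prop) :=
      {J | J ∈ P ∧ ∀ J' ∈ P, WellOrderingRel J' J → relLe J' J ∧ J' ≠ J} with hSdef
    have hSsubP : S ⊆ P := fun J hJ => hJ.1
    have hcof : ∀ J ∈ P, ∃ s ∈ S, relLe J s := by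
      intro J hJ
      set A : Set (Ω → Ω → Prop) := {x | x ∈ P ∧ relLe J x} with hAdef
      have hAne : A.Nonempty := ⟨J, hJ, fun _ _ h => h⟩
      obtain ⟨hmP, hmle⟩ := wf.min_mem A hAne
      refine ⟨wf.min A hAne, ⟨hmP, ?_⟩, hmle⟩
      intro J' hJ' hlt
      rcases cong_comparable htrans (hPcong _ hJ') (hPcong _ hmP) with h | h
      · refine ⟨h, ?_⟩
        rintro rfl
        exact wf.not_lt_min A ⟨hmP, hmle⟩ hlt
      · exact absurd hlt
          (wf.not_lt_min A ⟨hJ', fun x y hxy => h x y (hmle x y hxy)⟩)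
    have hsucc : ∀ s ∈ S, ∃ t ∈ S, (relLe s t ∧ s ≠ t) ∧
        ∀ u ∈ S, relLe s u → s ≠ u → relLe t u := by
      intro s hs
      obtain ⟨J', hJ'P, hJ'nle⟩ := hmax' s (hSsubP hs)
      have hsJ' : relLe s J' :=
        (cong_comparable htrans (hPcong _ hJ'P) (hPcong _ (hSsubP hs))).resolve_left hJ'nle
      set A : Set (Ω → Ω → Prop) := {u | u ∈ S ∧ relLe s u ∧ s ≠ u} with hAdef
      have hAne : A.Nonempty := by
        obtain ⟨t, htS, hJt⟩ := hcof J' hJ'P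
        refine ⟨t, htS, fun x y h => hJt x y (hsJ' x y h), ?_⟩
        rintro rfl
        exact hJ'nle hJt
      obtain ⟨hmS, hsm, hsnem⟩ := wf.min_mem A hAne
      refine ⟨wf.min A hAne, hmS, ⟨hsm, hsnem⟩, ?_⟩
      intro u huS hsu hsneu
      have hnr : ¬ WellOrderingRel u (wf.min A hAne) :=
        wf.not_lt_min A ⟨huS, hsu, hsneu⟩
      rcases trichotomous_of WellOrderingRel (wf.min A hAne) u with h1 | h1 | h1
      · exact (huS.2 _ (hSsubP hmS) h1).1
      · rw [h1]; exact fun _ _ h => h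
      · exact absurd h1 hnr
    have hSne : S.Nonempty := by
      obtain ⟨t, htS, -⟩ := hcof K₀ hK₀P
      exact ⟨t, htS⟩
    set s₀ : Ω → Ω → Prop := wf.min S hSne with hs₀def
    have hs₀S : s₀ ∈ S := wf.min_mem S hSne
    have hs₀le : ∀ s ∈ S, relLe s₀ s := by
      intro s hsS
      rcases trichotomous_of WellOrderingRel s₀ s with h1 | h1 | h1
      · exact (hsS.2 s₀ (hSsubP hs₀S) h1).1
      · rw [h1]; exact fun _ _ h => h
      · exact absurd h1 (wf.not_lt_min S hsS)
    -- choice data on the subtype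
    have hdata : ∀ s : ↥S, ∃ x : Ω, x ≠ α ∧ (s : Ω → Ω → Prop) = Vcong ⊤ α x :=
      fun s => (hSsubP s.2).1
    choose xP hxne hxeq using hdata
    have hsx : ∀ s : ↥S, (s : Ω → Ω → Prop) α (xP s) := by
      intro s
      rw [hxeq s]
      exact vcong_self _ _
    have hsucc' : ∀ s : ↥S, ∃ t : ↥S, (relLe (s : Ω → Ω → Prop) t ∧ (s : Ω → Ω → Prop) ≠ t) ∧
        ∀ u ∈ S, relLe (s : Ω → Ω → Prop) u → (s : Ω → Ω → Prop) ≠ u → relLe (t : Ω → Ω → Prop) u := by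
      intro s
      obtain ⟨t, htS, h1, h2⟩ := hsucc s s.2
      exact ⟨⟨t, htS⟩, h1, h2⟩
    choose nxt hnxt1 hnxt2 using hsucc'
    have hzs : ∀ s : ↥S, ∃ zz : Ω, (nxt s : Ω → Ω → Prop) α zz ∧
        ¬ (s : Ω → Ω → Prop) α zz := by
      intro s
      by_contra h
      push_neg at h
      have h1 := cls_le htrans (hPcong _ (hSsubP (nxt s).2)) (hPcong _ (hSsubP s.2)) α h
      exact (hnxt1 s).2 (funext fun x => funext fun y =>
        propext ⟨fun hh => (hnxt1 s).1 x y hh, fun hh => h1 x y hh⟩)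
    choose z hz1 hz2 using hzs
    have hys : ∀ s : ↥S, ∃ yy : Ω, (s : Ω → Ω → Prop) (z s) yy ∧ yy ≠ z s := by
      intro s
      obtain ⟨g, hg⟩ := htrans α (z s)
      refine ⟨g (xP s), ?_, ?_⟩
      · have := (hPcong _ (hSsubP s.2)).2.2 g (Subgroup.mem_top _) _ _ (hsx s)
        rwa [hg] at this
      · rw [← hg]
        intro hh
        exact hxne s (g.injective hh)
    choose y hy1 hy2 using hys
    choose φ hφ using fun s : ↥S => htrans (z s) (y s)
    set s0 : ↥S := ⟨s₀, hs₀S⟩ with hs0def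
    obtain ⟨φ₀, hφ₀⟩ := htrans α (xP s0)
    -- the pieces
    set Jrel : Option ↥S → (Ω → Ω → Prop) := fun i => Option.elim i s₀ (fun s => ↑s)
      with hJreldef
    set pt : Option ↥S → Ω := fun i => Option.elim i α z with hptdef
    set q : Option ↥S → (Ω ≃o Ω) := fun i => Option.elim i φ₀ φ with hqdef
    set C : Option ↥S → Set Ω := fun i => {γ | Jrel i (pt i) γ} with hCdef
    have hJP : ∀ i, Jrel i ∈ P := by
      rintro (_ | s)
      · exact hSsubP hs₀S
      · exact hSsubP s.2
    have hJcong : ∀ i, IsConvexCongruence (⊤ : Subgroup (Ω ≃o Ω)) (Jrel i) := fun i => hPcong _ (hJP i)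
    have hq1 : ∀ i, Jrel i (pt i) (q i (pt i)) := by
      rintro (_ | s)
      · show s₀ α (φ₀ α)
        rw [hφ₀]
        exact hsx s0
      · show (s : Ω → Ω → Prop) (z s) (φ s (z s))
        rw [hφ s]
        exact hy1 s
    have hq2 : ∀ i, q i (pt i) ≠ pt i := by
      rintro (_ | s)
      · show φ₀ α ≠ α
        rw [hφ₀]
        exact hxne s0
      · show φ s (z s) ≠ z s
        rw [hφ s]
        exact hy2 s
    have hCpt : ∀ i, pt i ∈ C i := fun i => (hJcong i).1.refl (pt i)
    -- disjointness
    have hdisjS : ∀ s t : ↥S, relLe (s : Ω → Ω → Prop) t →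
        (s : Ω → Ω → Prop) ≠ t → ∀ x, x ∈ C (some s) → x ∈ C (some t) → False := by
      intro s t hle hne x hx1 hx2
      have h1 : relLe (nxt s : Ω → Ω → Prop) t := hnxt2 s t t.2 hle hne
      have ht1 : (t : Ω → Ω → Prop) α (z s) := h1 _ _ (hz1 s)
      have hx1' : (s : Ω → Ω → Prop) (z s) x := hx1
      have hx2' : (t : Ω → Ω → Prop) (z t) x := hx2
      have ht2 : (t : Ω → Ω → Prop) α x :=
        (hJcong (some t)).1.trans ht1 (hle _ _ hx1')
      exact hz2 t ((hJcong (some t)).1.trans ht2 ((hJcong (some t)).1.symm hx2'))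
    have hdisjS0 : ∀ s : ↥S, ∀ x, x ∈ C (some s) → x ∈ C none → False := by
      intro s x hx1 hx0
      have hx0' : s₀ α x := hx0
      have hx1' : (s : Ω → Ω → Prop) (z s) x := hx1
      have h1 : (s : Ω → Ω → Prop) α x := hs₀le s s.2 _ _ hx0'
      exact hz2 s ((hJcong (some s)).1.trans h1 ((hJcong (some s)).1.symm hx1'))
    have hdisj : ∀ {i j : Option ↥S} {x : Ω}, x ∈ C i → x ∈ C j → i = j := by
      rintro (_ | s) (_ | t) x hxi hxj
      · rfl
      · exact (hdisjS0 t x hxj hxi).elim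
      · exact (hdisjS0 s x hxi hxj).elim
      · by_cases hst : (s : Ω → Ω → Prop) = t
        · exact congrArg some (Subtype.ext hst)
        · exfalso
          rcases cong_comparable htrans (hJcong (some s)) (hJcong (some t)) with h | h
          · exact hdisjS s t h hst x hxi hxj
          · exact hdisjS t s h (Ne.symm hst) x hxj hxi
    have hconv : ∀ i, ∀ a ∈ C i, ∀ b ∈ C i, ∀ c, a ≤ c → c ≤ b → c ∈ C i := by
      intro i a ha b hb c hac hcb
      exact cong_cls (hJcong i) ha hb hac hcb
    have hmapq : ∀ i, ∀ x ∈ C i, q i x ∈ C i := by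
      intro i x hx
      have hqx : Jrel i (q i (pt i)) (q i x) :=
        (hJcong i).2.2 (q i) (Subgroup.mem_top _) _ _ hx
      exact (hJcong i).1.trans (hq1 i) hqx
    have hsurq : ∀ i, ∀ yy ∈ C i, ∃ x ∈ C i, q i x = yy := by
      intro i yy hyy
      refine ⟨(q i)⁻¹ yy, ?_, by simp⟩
      have h1 : Jrel i (q i (pt i)) yy := (hJcong i).1.trans ((hJcong i).1.symm (hq1 i)) hyy
      have h2 := (hJcong i).2.2 (q i)⁻¹ (Subgroup.mem_top _) _ _ h1
      exact (by simpa using h2 : Jrel i (pt i) ((q i)⁻¹ yy))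
    obtain ⟨h, hpiece, hid⟩ := patch_iso C q hdisj hconv hmapq hsurq
    have hsuppC : ∀ ww : Ω, h ww ≠ ww → ∃ i, ww ∈ C i := by
      intro ww hww
      by_contra hc
      push_neg at hc
      exact hww (hid ww hc)
    have hKpt : ∀ i, Vcong ⊤ α β α (pt i) := by
      rintro (_ | s)
      · exact hKcong.1.refl α
      · exact (hSsubP (nxt s).2).2.1 _ _ (hz1 s)
    have hCsubΔ : ∀ i, ∀ γ ∈ C i, γ ∈ Δ := by
      intro i γ hγ
      have h1 : Vcong ⊤ α β (pt i) γ := (hJP i).2.1 _ _ hγ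
      exact hKcong.1.trans (hKpt i) h1
    have hrst : h ∈ rst (⊤ : Subgroup (Ω ≃o Ω)) Δ := by
      refine ⟨Subgroup.mem_top _, ?_⟩
      intro ww hww
      obtain ⟨i, hi⟩ := hsuppC ww hww
      exact hCsubΔ i ww hi
    rcases hctrl Δ hInT hnotmin h hrst with ⟨δ, hδ, hΔeq⟩ | ⟨Δ', hInT', hsupp', hss⟩
    · -- case 1
      obtain ⟨i, hi⟩ := hsuppC δ hδ.2
      have hhδ : h δ = q i δ := hpiece i δ hi
      have hqδ : q i δ ∈ C i := hmapq i δ hi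
      have hJδ : Jrel i δ (h δ) := by
        rw [hhδ]
        exact (hJcong i).1.trans ((hJcong i).1.symm hi) hqδ
      have hsub : Δ ⊆ C i := by
        intro γ hγ
        rw [hΔeq] at hγ
        have h1 : Jrel i δ γ := hγ (Jrel i) (hJcong i) hJδ
        exact (hJcong i).1.trans hi h1
      have hCeq : ∀ γ, γ ∈ C i ↔ γ ∈ Δ := fun γ => ⟨hCsubΔ i γ, fun hγ => hsub hγ⟩
      cases i with
      | none =>
        have heq : s₀ = Vcong ⊤ α β :=
          cls_eq_rel_eq htrans (hJcong none) hKcong α (fun γ => hCeq γ)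
        exact (hSsubP hs₀S).2.2 heq
      | some s =>
        have hαC : α ∈ C (some s) := (hCeq α).2 (hKcong.1.refl α)
        exact hz2 s ((hJcong (some s)).1.symm hαC)
    · -- case 2
      obtain ⟨κ, hκspine, δ'', hΔ'⟩ := hInT'
      have hκcong : IsConvexCongruence (⊤ : Subgroup (Ω ≃o Ω)) κ := by
        obtain ⟨a, b, hab, hκeq⟩ := hκspine
        rw [hκeq]
        exact isCC_Vcong a b
      have hαsupp : α ∈ supp h := by
        have h1 : h α = φ₀ α := hpiece none α (hCpt none)
        show h α ≠ α
        rw [h1, hφ₀]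
        exact hxne s0
      have hαΔ' : κ δ'' α := by
        have := hsupp' hαsupp
        rwa [hΔ'] at this
      have hκleK : relLe κ (Vcong ⊤ α β) := by
        rcases cong_comparable htrans hκcong hKcong with h' | h'
        · exact h'
        · exfalso
          apply hss.not_subset
          intro γ hγ
          have h1 : κ α γ := h' _ _ hγ
          have h2 : κ δ'' γ := hκcong.1.trans hαΔ' h1
          rw [hΔ']
          exact h2
      have hκneK : κ ≠ Vcong ⊤ α β := by
        intro heq
        apply hss.ne
        rw [hΔ', hΔdef]
        ext γ
        subst heq
        exact ⟨fun hγ => hκcong.1.trans (hκcong.1.symm hαΔ') hγ,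
               fun hγ => hκcong.1.trans hαΔ' hγ⟩
      have hκP : κ ∈ P := hspineP κ hκspine hκleK hκneK
      obtain ⟨t, htS, hκt⟩ := hcof κ hκP
      set t' : ↥S := ⟨t, htS⟩ with ht'def
      have hzC : z t' ∈ C (some t') := hCpt (some t')
      have hzsupp : z t' ∈ supp h := by
        show h (z t') ≠ z t'
        rw [hpiece (some t') (z t') hzC]
        exact hq2 (some t')
      have h1 : κ δ'' (z t') := by
        have := hsupp' hzsupp
        rwa [hΔ'] at this
      have h2 : κ α (z t') := hκcong.1.trans (hκcong.1.symm hαΔ') h1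
      exact hz2 t' (hκt _ _ h2)
  -- final assembly
  obtain ⟨J, hJP, hJmax⟩ := hmaxP
  obtain ⟨⟨xs, hxsne, hxseq⟩, hJle, hJne⟩ := hJP
  refine ⟨J, ⟨α, xs, fun hh => hxsne hh.symm, hxseq⟩, hJle, hJne, ?_⟩
  rintro K'' hK''spine ⟨h1, h2, h3, h4⟩
  have hK''P := hspineP K'' hK''spine h3 h4
  have h5 := hJmax K'' hK''P
  exact h2 (funext fun x => funext fun y =>
    propext ⟨fun hh => h1 x y hh, fun hh => h5 x y hh⟩)



end LPerm
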